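/- (Comparison with on-policy Monte Carlo) Let b*_t(s,a) = q_{π,t}(s,a), let μ* = μ^{*,b*}, and let u^{b*} denote u defined with baseline b*. For every t and s: Var( G^{PDIS}(τ^π_{t:T−1}) | S_t = s ) − Var( G^{b*}(τ^{μ*}_{t:T−1}) | S_t = s ) = Var_{a∼π_t(·|s)}( √(u^{b*}_t(s,a)) ) + Var_{a∼π_t(·|s)}( q_{π,t}(s,a) ) + δ^{ON}_t(s), where δ^{ON}_{T−1}(s) = 0 and, for t ≤ T−2, δ^{ON}_t(s) = E_{a∼π_t(·|s), s'∼p(·|s,a)}[ Var(G^{PDIS}(τ^π_{t+1:T−1}) | S_{t+1}=s') − Var(G^{b*}(τ^{μ*}_{t+1:T−1}) | S_{t+1}=s') ]; moreover δ^{ON}_t(s) ≥ 0 for all t and s. -/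
import Mathlib


open Finset

namespace DOpt

variable {S A : Type}

/-- A time-indexed policy: for each time step and state, a probability distribution on actions. -/
def IsPolicy [Fintype A] (μ : ℕ → S → A → ℝ) : Prop :=
  ∀ t s, (∀ a, 0 ≤ μ t s a) ∧ ∑ a, μ t s a = 1

/-- A transition probability kernel on the finite state space. -/
def IsKernel [Fintype S] (p : S → A → S → ℝ) : Prop :=
  ∀ s a, (∀ s', 0 ≤ p s a s') ∧ ∑ s', p s a s' = 1

/-- Action value `q_{π,t}(s,a)` computed with `n` remaining transitions after time `t`
(`n = T - 1 - t` in a horizon-`T` MDP). -/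
noncomputable def qval [Fintype S] [Fintype A] (p : S → A → S → ℝ) (π : ℕ → S → A → ℝ)
    (r : S → A → ℝ) : ℕ → ℕ → S → A → ℝ
  | 0, _, s, a => r s a
  | n + 1, t, s, a =>
      r s a + ∑ s', p s a s' * ∑ a', π (t + 1) s' a' * qval p π r n (t + 1) s' a'

/-- `q_{π,t}(s,a)` in the horizon-`T` MDP. -/
noncomputable def qf [Fintype S] [Fintype A] (T : ℕ) (p : S → A → S → ℝ)
    (π : ℕ → S → A → ℝ) (r : S → A → ℝ) (t : ℕ) (s : S) (a : A) : ℝ :=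
  qval p π r (T - 1 - t) t s a

/-- `v_{π,t}(s) = Σ_a π_t(a|s) q_{π,t}(s,a)`. -/
noncomputable def vf [Fintype S] [Fintype A] (T : ℕ) (p : S → A → S → ℝ)
    (π : ℕ → S → A → ℝ) (r : S → A → ℝ) (t : ℕ) (s : S) : ℝ :=
  ∑ a, π t s a * qf T p π r t s a

/-- `ν_{π,t}(s,a) = Var_{s' ∼ p(·|s,a)}(v_{π,t+1}(s'))` for `t ≤ T-2`, and `0` at `t = T-1`. -/
noncomputable def nuf [Fintype S] [Fintype A] (T : ℕ) (p : S → A → S → ℝ)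
    (π : ℕ → S → A → ℝ) (r : S → A → ℝ) (t : ℕ) (s : S) (a : A) : ℝ :=
  if t + 2 ≤ T then
    (∑ s', p s a s' * (vf T p π r (t + 1) s') ^ 2) -
      (∑ s', p s a s' * vf T p π r (t + 1) s') ^ 2
  else 0

/-- Trajectories with `n` further transitions after the first action:
`(a_t, s_{t+1}, a_{t+1}, …, s_{t+n}, a_{t+n})`. -/
def Traj (S A : Type) : ℕ → Type
  | 0 => A
  | n + 1 => A × S × Traj S A n

/-- Expectation, over trajectories generated by the behavior policy `μ` starting at time `t`
in state `s` with `n` further transitions, of a function `f` of the trajectory. -/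
noncomputable def Exp [Fintype S] [Fintype A] (p : S → A → S → ℝ) (μ : ℕ → S → A → ℝ) :
    (n : ℕ) → ℕ → S → (Traj S A n → ℝ) → ℝ
  | 0, t, s, f => ∑ a, μ t s a * f a
  | n + 1, t, s, f =>
      ∑ a, μ t s a * ∑ s', p s a s' * Exp p μ n (t + 1) s' (fun τ => f (a, s', τ))

/-- Conditional variance of a function of the trajectory, given `S_t = s`. -/
noncomputable def Var [Fintype S] [Fintype A] (p : S → A → S → ℝ) (μ : ℕ → S → A → ℝ)
    (n : ℕ) (t : ℕ) (s : S) (f : Traj S A n → ℝ) : ℝ :=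
  Exp p μ n t s (fun τ => (f τ) ^ 2) - (Exp p μ n t s f) ^ 2

/-- `b̄_t(s) = Σ_a π_t(a|s) b_t(s,a)`. -/
noncomputable def bbar [Fintype A] (π : ℕ → S → A → ℝ) (b : ℕ → S → A → ℝ)
    (t : ℕ) (s : S) : ℝ :=
  ∑ a, π t s a * b t s a

/-- The per-decision importance-sampling estimator `G^b` with baseline `b`, target policy `π`
and behavior policy `μ`, as a function of the trajectory from time `t` (with `n` further
transitions, `n = T - 1 - t`). -/
noncomputable def Gest [Fintype S] [Fintype A] (π μ : ℕ → S → A → ℝ) (r : S → A → ℝ)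
    (b : ℕ → S → A → ℝ) : (n : ℕ) → ℕ → S → Traj S A n → ℝ
  | 0, t, s, a => (π t s a / μ t s a) * (r s a - b t s a) + bbar π b t s
  | n + 1, t, s, (a, s', τ) =>
      (π t s a / μ t s a) * (r s a + Gest π μ r b n (t + 1) s' τ - b t s a) + bbar π b t s

/-- Normalization of a weight vector into a probability distribution; the uniform distribution
when the total weight vanishes. -/
noncomputable def normPol [Fintype A] (w : A → ℝ) (a : A) : ℝ :=
  if (∑ a', w a') = 0 then ((Fintype.card A : ℝ))⁻¹ else w a / ∑ a', w a'

/-- `u_{π,t}(s,a)` (with baseline `b`), defined backwards in time together with the optimal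
behavior policy `μ*`; the first argument is the number `n = T - 1 - t` of remaining
transitions after time `t`. -/
noncomputable def uAux [Fintype S] [Fintype A] (T : ℕ) (p : S → A → S → ℝ)
    (π : ℕ → S → A → ℝ) (r : S → A → ℝ) (b : ℕ → S → A → ℝ) :
    ℕ → ℕ → S → A → ℝ
  | 0, t, s, a => (qf T p π r t s a - b t s a) ^ 2
  | n + 1, t, s, a =>
      (qf T p π r t s a - b t s a) ^ 2 + nuf T p π r t s a +
        ∑ s', p s a s' *
          Var p
            (fun t' s₁ a₁ => normPol (fun a₂ =>
              π t' s₁ a₂ * Real.sqrt (uAux T p π r b (n - (t' - (t + 1))) t' s₁ a₂)) a₁)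
            n (t + 1) s'
            (Gest π
              (fun t' s₁ a₁ => normPol (fun a₂ =>
                π t' s₁ a₂ * Real.sqrt (uAux T p π r b (n - (t' - (t + 1))) t' s₁ a₂)) a₁)
              r b n (t + 1) s')
  termination_by n => n
  decreasing_by all_goals omega

/-- `u_{π,t}(s,a)` in the horizon-`T` MDP, with baseline `b`. -/
noncomputable def uf [Fintype S] [Fintype A] (T : ℕ) (p : S → A → S → ℝ)
    (π : ℕ → S → A → ℝ) (r : S → A → ℝ) (b : ℕ → S → A → ℝ) (t : ℕ) (s : S) (a : A) : ℝ :=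
  uAux T p π r b (T - 1 - t) t s a

/-- The optimal behavior policy `μ*_t(a|s) ∝ π_t(a|s) √(u_{π,t}(s,a))` tailored to the
baseline `b` (uniform when all the weights vanish). -/
noncomputable def mustar [Fintype S] [Fintype A] (T : ℕ) (p : S → A → S → ℝ)
    (π : ℕ → S → A → ℝ) (r : S → A → ℝ) (b : ℕ → S → A → ℝ) (t : ℕ) (s : S) (a : A) : ℝ :=
  normPol (fun a' => π t s a' * Real.sqrt (uf T p π r b t s a')) a

/-- Conditional expectation `E[G^b(τ^μ_{t:T-1}) | S_t = s]`. -/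
noncomputable def ExpG [Fintype S] [Fintype A] (T : ℕ) (p : S → A → S → ℝ)
    (π μ : ℕ → S → A → ℝ) (r : S → A → ℝ) (b : ℕ → S → A → ℝ) (t : ℕ) (s : S) : ℝ :=
  Exp p μ (T - 1 - t) t s (Gest π μ r b (T - 1 - t) t s)

/-- Conditional variance `Var(G^b(τ^μ_{t:T-1}) | S_t = s)`. -/
noncomputable def VarG [Fintype S] [Fintype A] (T : ℕ) (p : S → A → S → ℝ)
    (π μ : ℕ → S → A → ℝ) (r : S → A → ℝ) (b : ℕ → S → A → ℝ) (t : ℕ) (s : S) : ℝ :=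
  Var p μ (T - 1 - t) t s (Gest π μ r b (T - 1 - t) t s)

/-- Membership in the enlarged policy-search space
`Λ = {μ : ∀ t,s,a, μ_t(a|s) = 0 → π_t(a|s)·u_{π,t}(s,a) = 0}`. -/
def inLambda [Fintype S] [Fintype A] (T : ℕ) (p : S → A → S → ℝ)
    (π : ℕ → S → A → ℝ) (r : S → A → ℝ) (b : ℕ → S → A → ℝ) (μ : ℕ → S → A → ℝ) : Prop :=
  ∀ t s a, t < T → μ t s a = 0 → π t s a * uf T p π r b t s a = 0


/-- The optimal baseline `b*_t(s,a) = q_{π,t}(s,a)`. -/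
noncomputable def bstar [Fintype S] [Fintype A] (T : ℕ) (p : S → A → S → ℝ)
    (π : ℕ → S → A → ℝ) (r : S → A → ℝ) : ℕ → S → A → ℝ :=
  fun t s a => qf T p π r t s a

/-- The zero baseline: with it, `Gest` is the plain PDIS estimator `G^{PDIS}`. -/
def zerob : ℕ → S → A → ℝ := fun _ _ _ => 0

/-- `δ^{ON}_t(s)`: compounded future variance reduction of the doubly optimal estimator
relative to the on-policy Monte Carlo (plain PDIS under `π`) estimator. -/
noncomputable def deltaON {S A : Type} [Fintype S] [Fintype A] [Nonempty A]
    (T : ℕ) (p : S → A → S → ℝ) (π : ℕ → S → A → ℝ) (r : S → A → ℝ)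
    (t : ℕ) (s : S) : ℝ :=
  if t + 2 ≤ T then
    ∑ a, π t s a * ∑ s', p s a s' *
      (VarG T p π π r zerob (t + 1) s' -
        VarG T p π (mustar T p π r (bstar T p π r)) r (bstar T p π r) (t + 1) s')
  else 0

/-! ### Auxiliary lemmas -/

section Aux

variable [Fintype S] [Fintype A]

/-- Generic finite "variance nonneg": for a probability vector `w`, `(∑ w x)² ≤ ∑ w x²`. -/
lemma sq_sum_le_sum_sq {ι : Type*} [Fintype ι] (w x : ι → ℝ) (hw : ∀ i, 0 ≤ w i)
    (hw1 : ∑ i, w i = 1) : (∑ i, w i * x i) ^ 2 ≤ ∑ i, w i * x i ^ 2 := by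
  have h := Finset.sum_mul_sq_le_sq_mul_sq Finset.univ (fun i => Real.sqrt (w i))
    (fun i => Real.sqrt (w i) * x i)
  have e1 : ∀ i : ι, Real.sqrt (w i) * (Real.sqrt (w i) * x i) = w i * x i := by
    intro i
    rw [← mul_assoc, Real.mul_self_sqrt (hw i)]
  have e2 : ∀ i : ι, Real.sqrt (w i) ^ 2 = w i := fun i => Real.sq_sqrt (hw i)
  have e3 : ∀ i : ι, (Real.sqrt (w i) * x i) ^ 2 = w i * x i ^ 2 := by
    intro i; rw [mul_pow, e2]
  simp only [e1, e2, e3, hw1, one_mul] at h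
  exact h

lemma normPol_nonneg [Nonempty A] (w : A → ℝ) (hw : ∀ a, 0 ≤ w a) (a : A) :
    0 ≤ normPol w a := by
  unfold normPol
  split
  · positivity
  · exact div_nonneg (hw a) (Finset.sum_nonneg fun i _ => hw i)

lemma normPol_sum_one [Nonempty A] (w : A → ℝ) : ∑ a, normPol w a = 1 := by
  unfold normPol
  by_cases h : (∑ a', w a') = 0
  · simp only [h, if_pos, Finset.sum_const, Finset.card_univ, nsmul_eq_mul]
    rw [mul_inv_cancel₀]
    exact_mod_cast Fintype.card_ne_zero
  · simp only [if_neg h, ← Finset.sum_div]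
    exact div_self h

lemma mustar_nonneg [Nonempty A] (T : ℕ) (p : S → A → S → ℝ) (π : ℕ → S → A → ℝ)
    (r : S → A → ℝ) (b : ℕ → S → A → ℝ) (hπ : IsPolicy π) (t : ℕ) (s : S) (a : A) :
    0 ≤ mustar T p π r b t s a :=
  normPol_nonneg _ (fun a' => mul_nonneg ((hπ t s).1 a') (Real.sqrt_nonneg _)) a

lemma mustar_sum_one [Nonempty A] (T : ℕ) (p : S → A → S → ℝ) (π : ℕ → S → A → ℝ)
    (r : S → A → ℝ) (b : ℕ → S → A → ℝ) (t : ℕ) (s : S) :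
    ∑ a, mustar T p π r b t s a = 1 := normPol_sum_one _

/-- `Exp` of a pointwise-equal function. -/
lemma Exp_congr (p : S → A → S → ℝ) (μ : ℕ → S → A → ℝ) (n t : ℕ) (s : S)
    (f g : Traj S A n → ℝ) (h : ∀ τ, f τ = g τ) : Exp p μ n t s f = Exp p μ n t s g := by
  have : f = g := funext h
  rw [this]

/-- `Exp` only depends on the behavior policy at times `t, …, t+n`. -/
lemma Exp_congr_pol (p : S → A → S → ℝ) (μ₁ μ₂ : ℕ → S → A → ℝ) :
    ∀ (n t : ℕ) (s : S) (f : Traj S A n → ℝ),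
      (∀ t', t ≤ t' → t' ≤ t + n → μ₁ t' = μ₂ t') →
      Exp p μ₁ n t s f = Exp p μ₂ n t s f := by
  intro n
  induction n with
  | zero =>
    intro t s f h
    simp only [Exp, h t le_rfl (Nat.le_add_right _ _)]
  | succ m ih =>
    intro t s f h
    simp only [Exp]
    rw [h t le_rfl (Nat.le_add_right _ _)]
    refine Finset.sum_congr rfl fun a _ => ?_
    congr 1
    refine Finset.sum_congr rfl fun s' _ => ?_
    congr 1
    exact ih (t + 1) s' _ fun t' h1 h2 => h t' (le_trans (Nat.le_succ t) h1) (by omega)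

/-- `Gest` only depends on the behavior policy at times `t, …, t+n`. -/
lemma Gest_congr_pol (π : ℕ → S → A → ℝ) (μ₁ μ₂ : ℕ → S → A → ℝ) (r : S → A → ℝ)
    (b : ℕ → S → A → ℝ) :
    ∀ (n t : ℕ) (s : S) (τ : Traj S A n),
      (∀ t', t ≤ t' → t' ≤ t + n → μ₁ t' = μ₂ t') →
      Gest π μ₁ r b n t s τ = Gest π μ₂ r b n t s τ := by
  intro n
  induction n with
  | zero =>
    intro t s τ h
    simp only [Gest, h t le_rfl (Nat.le_add_right _ _)]
  | succ m ih =>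
    intro t s τ h
    obtain ⟨a, s', τ'⟩ := τ
    simp only [Gest, h t le_rfl (Nat.le_add_right _ _)]
    rw [ih (t + 1) s' τ' fun t' h1 h2 => h t' (le_trans (Nat.le_succ t) h1) (by omega)]

lemma Exp_add (p : S → A → S → ℝ) (μ : ℕ → S → A → ℝ) :
    ∀ (n t : ℕ) (s : S) (f g : Traj S A n → ℝ),
      Exp p μ n t s (fun τ => f τ + g τ) = Exp p μ n t s f + Exp p μ n t s g := by
  intro n
  induction n with
  | zero => intro t s f g; simp only [Exp, mul_add, Finset.sum_add_distrib]
  | succ m ih =>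
    intro t s f g
    simp only [Exp]
    rw [← Finset.sum_add_distrib]
    refine Finset.sum_congr rfl fun a _ => ?_
    rw [← mul_add, ← Finset.sum_add_distrib]
    congr 1
    refine Finset.sum_congr rfl fun s' _ => ?_
    rw [← mul_add, ih]

lemma Exp_smul (p : S → A → S → ℝ) (μ : ℕ → S → A → ℝ) :
    ∀ (n t : ℕ) (s : S) (c : ℝ) (f : Traj S A n → ℝ),
      Exp p μ n t s (fun τ => c * f τ) = c * Exp p μ n t s f := by
  intro n
  induction n with
  | zero => intro t s c f; simp only [Exp, Finset.mul_sum]; exact Finset.sum_congr rfl fun a _ => by ring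
  | succ m ih =>
    intro t s c f
    simp only [Exp, Finset.mul_sum]
    refine Finset.sum_congr rfl fun a _ => ?_
    refine Finset.sum_congr rfl fun s' _ => ?_
    rw [ih]
    ring

lemma Exp_const (p : S → A → S → ℝ) (μ : ℕ → S → A → ℝ) (hp : IsKernel p)
    (hμ : ∀ t s, ∑ a, μ t s a = 1) :
    ∀ (n t : ℕ) (s : S) (c : ℝ), Exp p μ n t s (fun _ => c) = c := by
  intro n
  induction n with
  | zero => intro t s c; simp only [Exp, ← Finset.sum_mul, hμ, one_mul]
  | succ m ih =>
    intro t s c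
    simp only [Exp, ih, ← Finset.sum_mul, (hp _ _).2, hμ, one_mul]

lemma Exp_nonneg (p : S → A → S → ℝ) (μ : ℕ → S → A → ℝ) (hp : IsKernel p)
    (hμ : ∀ t s a, 0 ≤ μ t s a) :
    ∀ (n t : ℕ) (s : S) (f : Traj S A n → ℝ), (∀ τ, 0 ≤ f τ) → 0 ≤ Exp p μ n t s f := by
  intro n
  induction n with
  | zero =>
    intro t s f hf
    exact Finset.sum_nonneg fun a _ => mul_nonneg (hμ t s a) (hf a)
  | succ m ih =>
    intro t s f hf
    refine Finset.sum_nonneg fun a _ => mul_nonneg (hμ t s a) ?_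
    refine Finset.sum_nonneg fun s' _ => mul_nonneg ((hp s a).1 s') ?_
    exact ih (t + 1) s' _ fun τ => hf (a, s', τ)

lemma Var_nonneg' (p : S → A → S → ℝ) (μ : ℕ → S → A → ℝ) (hp : IsKernel p)
    (hμ0 : ∀ t s a, 0 ≤ μ t s a) (hμ1 : ∀ t s, ∑ a, μ t s a = 1)
    (n t : ℕ) (s : S) (f : Traj S A n → ℝ) : 0 ≤ Var p μ n t s f := by
  set m := Exp p μ n t s f with hm
  have key : Exp p μ n t s (fun τ => (f τ - m) ^ 2) = Var p μ n t s f := by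
    have : ∀ τ, (f τ - m) ^ 2 = f τ ^ 2 + ((-2 * m) * f τ + m ^ 2) := by intro τ; ring
    rw [Exp_congr p μ n t s _ _ this, Exp_add, Exp_add, Exp_smul,
      Exp_const p μ hp hμ1 n t s (m ^ 2)]
    simp only [Var, ← hm]
    ring
  rw [← key]
  exact Exp_nonneg p μ hp hμ0 n t s _ fun τ => sq_nonneg _

lemma qf_succ (T : ℕ) (p : S → A → S → ℝ) (π : ℕ → S → A → ℝ) (r : S → A → ℝ)
    (t : ℕ) (ht : t + 2 ≤ T) (s : S) (a : A) :
    qf T p π r t s a = r s a + ∑ s', p s a s' * vf T p π r (t + 1) s' := by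
  have h1 : T - 1 - t = (T - 1 - (t + 1)) + 1 := by omega
  simp only [qf, h1, qval, vf]

lemma qf_last (T : ℕ) (p : S → A → S → ℝ) (π : ℕ → S → A → ℝ) (r : S → A → ℝ)
    (t : ℕ) (ht : t + 1 = T) (s : S) (a : A) : qf T p π r t s a = r s a := by
  have h1 : T - 1 - t = 0 := by omega
  simp only [qf, h1, qval]

lemma Var_Gest_congr_pol (p : S → A → S → ℝ) (π μ₁ μ₂ : ℕ → S → A → ℝ) (r : S → A → ℝ)
    (b : ℕ → S → A → ℝ) (n t : ℕ) (s : S)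
    (h : ∀ t', t ≤ t' → t' ≤ t + n → μ₁ t' = μ₂ t') :
    Var p μ₁ n t s (Gest π μ₁ r b n t s) = Var p μ₂ n t s (Gest π μ₂ r b n t s) := by
  unfold Var
  rw [Exp_congr p μ₁ n t s _ (fun τ => (Gest π μ₂ r b n t s τ) ^ 2)
      (fun τ => by rw [Gest_congr_pol π μ₁ μ₂ r b n t s τ h]),
    Exp_congr p μ₁ n t s (Gest π μ₁ r b n t s) (Gest π μ₂ r b n t s)
      (fun τ => Gest_congr_pol π μ₁ μ₂ r b n t s τ h),
    Exp_congr_pol p μ₁ μ₂ n t s _ h, Exp_congr_pol p μ₁ μ₂ n t s _ h]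

lemma uf_last (T : ℕ) (p : S → A → S → ℝ) (π : ℕ → S → A → ℝ) (r : S → A → ℝ)
    (b : ℕ → S → A → ℝ) (t : ℕ) (ht : t + 1 = T) (s : S) (a : A) :
    uf T p π r b t s a = (qf T p π r t s a - b t s a) ^ 2 := by
  have h1 : T - 1 - t = 0 := by omega
  simp only [uf, h1, uAux]

lemma uf_succ (T : ℕ) (p : S → A → S → ℝ) (π : ℕ → S → A → ℝ) (r : S → A → ℝ)
    (b : ℕ → S → A → ℝ) (t : ℕ) (ht : t + 2 ≤ T) (s : S) (a : A) :
    uf T p π r b t s a = (qf T p π r t s a - b t s a) ^ 2 + nuf T p π r t s a +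
      ∑ s', p s a s' *
        Var p (mustar T p π r b) (T - 2 - t) (t + 1) s'
          (Gest π (mustar T p π r b) r b (T - 2 - t) (t + 1) s') := by
  have h1 : T - 1 - t = (T - 2 - t) + 1 := by omega
  rw [uf, h1, uAux]
  congr 1
  refine Finset.sum_congr rfl fun s' _ => ?_
  congr 1
  refine Var_Gest_congr_pol p π _ _ r b (T - 2 - t) (t + 1) s' fun t' h1' h2' => ?_
  have h3 : (T - 2 - t) - (t' - (t + 1)) = T - 1 - t' := by omega
  funext s₁ a₁
  rw [h3]
  rfl

lemma bbar_bstar (T : ℕ) (p : S → A → S → ℝ) (π : ℕ → S → A → ℝ) (r : S → A → ℝ)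
    (t : ℕ) (s : S) : bbar π (bstar T p π r) t s = vf T p π r t s := rfl

/-- Unbiasedness of `G^{b*}` under any behavior policy whose rows sum to one. -/
lemma Exp_Gest_bstar (T : ℕ) (p : S → A → S → ℝ) (hp : IsKernel p)
    (π : ℕ → S → A → ℝ) (r : S → A → ℝ) (μ : ℕ → S → A → ℝ)
    (hμ1 : ∀ t s, ∑ a, μ t s a = 1) :
    ∀ (n t : ℕ), t + n + 1 = T → ∀ s : S,
      Exp p μ n t s (Gest π μ r (bstar T p π r) n t s) = vf T p π r t s := by
  intro n
  induction n with
  | zero =>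
    intro t hT s
    simp only [Exp, Gest]
    have hq : ∀ a : A, bstar T p π r t s a = r s a := fun a => qf_last T p π r t hT s a
    simp only [hq, sub_self, mul_zero, zero_add, ← Finset.sum_mul, hμ1, one_mul, bbar_bstar]
  | succ m ih =>
    intro t hT s
    have hT2 : t + 2 ≤ T := by omega
    simp only [Exp, Gest]
    have inner : ∀ (a : A) (s' : S),
        Exp p μ m (t + 1) s' (fun τ =>
            π t s a / μ t s a *
              (r s a + Gest π μ r (bstar T p π r) m (t + 1) s' τ - bstar T p π r t s a) +
              bbar π (bstar T p π r) t s) =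
          π t s a / μ t s a * (r s a - qf T p π r t s a + vf T p π r (t + 1) s') +
            vf T p π r t s := by
      intro a s'
      rw [Exp_congr p μ m (t + 1) s' _
          (fun τ => (π t s a / μ t s a * (r s a - bstar T p π r t s a) +
              bbar π (bstar T p π r) t s) +
            π t s a / μ t s a * Gest π μ r (bstar T p π r) m (t + 1) s' τ)
          (fun τ => by ring), Exp_add, Exp_smul, Exp_const p μ hp hμ1,
        ih (t + 1) (by omega) s', bbar_bstar]
      show π t s a / μ t s a * (r s a - qf T p π r t s a) + vf T p π r t s + _ = _
      ring
    have hout : ∀ a : A,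
        (∑ s', p s a s' *
            (π t s a / μ t s a * (r s a - qf T p π r t s a + vf T p π r (t + 1) s') +
              vf T p π r t s)) = vf T p π r t s := by
      intro a
      have expand : ∀ s' : S,
          p s a s' * (π t s a / μ t s a * (r s a - qf T p π r t s a + vf T p π r (t + 1) s') +
              vf T p π r t s) =
            π t s a / μ t s a * ((r s a - qf T p π r t s a) * (p s a s') +
              p s a s' * vf T p π r (t + 1) s') + p s a s' * vf T p π r t s := by
        intro s'; ring
      simp only [expand, Finset.sum_add_distrib, ← Finset.mul_sum, ← Finset.sum_mul,
        (hp s a).2, mul_one, one_mul]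
      have : r s a - qf T p π r t s a + ∑ s', p s a s' * vf T p π r (t + 1) s' = 0 := by
        rw [qf_succ T p π r t hT2 s a]; ring
      rw [this, mul_zero, zero_add]
    simp only [inner, hout, ← Finset.sum_mul, hμ1, one_mul]

/-- Unbiasedness of the on-policy PDIS estimator. -/
lemma Exp_Gest_pdis (T : ℕ) (p : S → A → S → ℝ) (hp : IsKernel p)
    (π : ℕ → S → A → ℝ) (hπ : IsPolicy π) (r : S → A → ℝ) :
    ∀ (n t : ℕ), t + n + 1 = T → ∀ s : S,
      Exp p π n t s (Gest π π r zerob n t s) = vf T p π r t s := by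
  intro n
  induction n with
  | zero =>
    intro t hT s
    simp only [Exp, Gest, zerob, bbar, mul_zero, Finset.sum_const_zero, sub_zero, add_zero, vf]
    refine Finset.sum_congr rfl fun a _ => ?_
    rw [qf_last T p π r t hT s a]
    by_cases hπa : π t s a = 0
    · simp [hπa]
    · rw [div_self hπa, one_mul]
  | succ m ih =>
    intro t hT s
    have hT2 : t + 2 ≤ T := by omega
    simp only [Exp, Gest]
    have hbb : bbar π (zerob : ℕ → S → A → ℝ) t s = 0 := by
      simp [bbar, zerob]
    have inner : ∀ (a : A) (s' : S),
        Exp p π m (t + 1) s' (fun τ =>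
            π t s a / π t s a * (r s a + Gest π π r zerob m (t + 1) s' τ - zerob t s a) +
              bbar π zerob t s) =
          π t s a / π t s a * (r s a + vf T p π r (t + 1) s') := by
      intro a s'
      rw [Exp_congr p π m (t + 1) s' _
          (fun τ => (π t s a / π t s a * r s a) +
            π t s a / π t s a * Gest π π r zerob m (t + 1) s' τ)
          (fun τ => by simp only [zerob, hbb]; ring), Exp_add, Exp_smul, Exp_smul,
        Exp_const p π hp (fun t' s₁ => (hπ t' s₁).2), ih (t + 1) (by omega) s']
      ring
    simp only [inner]
    have hout : ∀ a : A,
        (∑ s', p s a s' * (π t s a / π t s a * (r s a + vf T p π r (t + 1) s'))) =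
          π t s a / π t s a * qf T p π r t s a := by
      intro a
      have expand : ∀ s' : S,
          p s a s' * (π t s a / π t s a * (r s a + vf T p π r (t + 1) s')) =
            π t s a / π t s a * (r s a * p s a s' + p s a s' * vf T p π r (t + 1) s') := by
        intro s'; ring
      simp only [expand, ← Finset.mul_sum]
      congr 1
      rw [Finset.sum_add_distrib, ← Finset.mul_sum, (hp s a).2, mul_one,
        qf_succ T p π r t hT2 s a]
    conv_rhs => rw [vf]
    refine Finset.sum_congr rfl fun a _ => ?_
    rw [hout a]
    by_cases hπa : π t s a = 0
    · simp [hπa]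
    · rw [div_self hπa, one_mul]

lemma aux_term (pa ua Z : ℝ) (hua : 0 ≤ ua) (hZ : Z ≠ 0) (hw : pa * Real.sqrt ua ≠ 0) :
    (pa * Real.sqrt ua / Z) * ((pa / (pa * Real.sqrt ua / Z)) ^ 2 * ua) =
      Z * (pa * Real.sqrt ua) := by
  have h2 : pa ≠ 0 := fun h => hw (by rw [h, zero_mul])
  have h1 : Real.sqrt ua ≠ 0 := fun h => hw (by rw [h, mul_zero])
  have h3 : ua = Real.sqrt ua * Real.sqrt ua := (Real.mul_self_sqrt hua).symm
  generalize hs : Real.sqrt ua = σ at *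
  rw [h3]
  field_simp

lemma key_sum [Nonempty A] (π u : A → ℝ) (hπ0 : ∀ a, 0 ≤ π a) (hu : ∀ a, 0 ≤ u a) :
    ∑ a, normPol (fun a' => π a' * Real.sqrt (u a')) a *
        ((π a / normPol (fun a' => π a' * Real.sqrt (u a')) a) ^ 2 * u a) =
      (∑ a, π a * Real.sqrt (u a)) ^ 2 := by
  set w : A → ℝ := fun a => π a * Real.sqrt (u a) with hw
  have hw0 : ∀ a, 0 ≤ w a := fun a => mul_nonneg (hπ0 a) (Real.sqrt_nonneg _)
  by_cases hZ : (∑ a', w a') = 0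
  · have hall : ∀ a ∈ Finset.univ, w a = 0 :=
      (Finset.sum_eq_zero_iff_of_nonneg fun a _ => hw0 a).mp hZ
    have hterm : ∀ a : A, π a ^ 2 * u a = 0 := by
      intro a
      have h0 : π a * Real.sqrt (u a) = 0 := hall a (Finset.mem_univ a)
      calc π a ^ 2 * u a = (π a * Real.sqrt (u a)) ^ 2 := by
            rw [mul_pow, Real.sq_sqrt (hu a)]
        _ = 0 := by rw [h0]; ring
    have hL : ∀ a : A, normPol w a * ((π a / normPol w a) ^ 2 * u a) = 0 := by
      intro a
      simp only [normPol, hZ, if_pos]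
      rw [div_inv_eq_mul, mul_pow]
      have : (↑(Fintype.card A) : ℝ)⁻¹ * (π a ^ 2 * (↑(Fintype.card A) : ℝ) ^ 2 * u a) =
          (π a ^ 2 * u a) * ((↑(Fintype.card A) : ℝ)⁻¹ * (↑(Fintype.card A) : ℝ) ^ 2) := by
        ring
      rw [this, hterm a, zero_mul]
    have hR : (∑ a, w a) ^ 2 = 0 := by rw [hZ]; norm_num
    rw [Finset.sum_congr rfl fun a _ => hL a, hR, Finset.sum_const_zero]
  · have hform : ∀ a : A, normPol w a = w a / (∑ a', w a') := by
      intro a; simp only [normPol, if_neg hZ]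
    calc ∑ a, normPol w a * ((π a / normPol w a) ^ 2 * u a)
        = ∑ a, (∑ a', w a') * w a := by
          refine Finset.sum_congr rfl fun a _ => ?_
          rw [hform a]
          by_cases hwa : w a = 0
          · rw [hwa, zero_div, zero_mul, mul_zero]
          · exact aux_term (π a) (u a) _ (hu a) hZ hwa
      _ = (∑ a, w a) ^ 2 := by rw [← Finset.mul_sum]; ring

lemma u_nonneg [Nonempty A] (T : ℕ) (p : S → A → S → ℝ) (hp : IsKernel p)
    (π : ℕ → S → A → ℝ) (hπ : IsPolicy π) (r : S → A → ℝ) (b : ℕ → S → A → ℝ)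
    (t : ℕ) (ht : t < T) (s : S) (a : A) : 0 ≤ uf T p π r b t s a := by
  have hnuf : 0 ≤ nuf T p π r t s a := by
    unfold nuf
    split
    · have := sq_sum_le_sum_sq (fun s' => p s a s') (fun s' => vf T p π r (t + 1) s')
        (fun s' => (hp s a).1 s') (hp s a).2
      linarith
    · exact le_refl 0
  rcases Nat.lt_or_ge (t + 1) T with h2 | h2
  · rw [uf_succ T p π r b t (by omega) s a]
    have hv : 0 ≤ ∑ s', p s a s' *
        Var p (mustar T p π r b) (T - 2 - t) (t + 1) s'
          (Gest π (mustar T p π r b) r b (T - 2 - t) (t + 1) s') := by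
      refine Finset.sum_nonneg fun s' _ => mul_nonneg ((hp s a).1 s') ?_
      exact Var_nonneg' p _ hp (fun t' s₁ a₁ => mustar_nonneg T p π r b hπ t' s₁ a₁)
        (fun t' s₁ => mustar_sum_one T p π r b t' s₁) _ _ _ _
    have := sq_nonneg (qf T p π r t s a - b t s a)
    linarith
  · rw [uf_last T p π r b t (by omega) s a]
    exact sq_nonneg _

/-- The variance of the doubly optimal estimator: `Var = (∑_a π_t(a|s) √(u_t(s,a)))²`. -/
lemma Var_Gest_bstar [Nonempty A] (T : ℕ) (p : S → A → S → ℝ) (hp : IsKernel p)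
    (π : ℕ → S → A → ℝ) (hπ : IsPolicy π) (r : S → A → ℝ)
    (n t : ℕ) (hT : t + n + 1 = T) (s : S) :
    Var p (mustar T p π r (bstar T p π r)) n t s
        (Gest π (mustar T p π r (bstar T p π r)) r (bstar T p π r) n t s) =
      (∑ a, π t s a * Real.sqrt (uf T p π r (bstar T p π r) t s a)) ^ 2 := by
  set b := bstar T p π r with hbdef
  set μ := mustar T p π r b with hμdef
  have hμ0 : ∀ t' s₁ a₁, 0 ≤ μ t' s₁ a₁ := fun t' s₁ a₁ => mustar_nonneg T p π r b hπ t' s₁ a₁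
  have hμ1 : ∀ t' s₁, ∑ a₁, μ t' s₁ a₁ = 1 := fun t' s₁ => mustar_sum_one T p π r b t' s₁
  have hufz : ∀ a : A, uf T p π r b t s a = 0 → π t s a * Real.sqrt (uf T p π r b t s a) = 0 := by
    intro a h; rw [h, Real.sqrt_zero, mul_zero]
  rcases n with - | m
  · -- base case: t = T - 1
    have ht1 : t + 1 = T := by omega
    have hflat : ∀ a : A, Gest π μ r b 0 t s a = vf T p π r t s := by
      intro a
      show π t s a / μ t s a * (r s a - b t s a) + bbar π b t s = vf T p π r t s
      have : b t s a = r s a := qf_last T p π r t ht1 s a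
      rw [this, sub_self, mul_zero, zero_add, bbar_bstar]
    have hu0 : ∀ a : A, uf T p π r b t s a = 0 := by
      intro a
      rw [uf_last T p π r b t ht1 s a]
      have : b t s a = qf T p π r t s a := rfl
      rw [this, sub_self]
      norm_num
    rw [Var, Exp_congr p μ 0 t s _ (fun _ => vf T p π r t s ^ 2)
        (fun a => by rw [hflat a]),
      Exp_congr p μ 0 t s (Gest π μ r b 0 t s) (fun _ => vf T p π r t s) hflat,
      Exp_const p μ hp hμ1, Exp_const p μ hp hμ1]
    rw [Finset.sum_congr rfl fun a _ => by rw [hu0 a, Real.sqrt_zero, mul_zero]]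
    simp
  · -- inductive-free step using uf_succ
    have hT2 : t + 2 ≤ T := by omega
    have hm : T - 2 - t = m := by omega
    have hq : ∀ a : A, b t s a = qf T p π r t s a := fun a => rfl
    -- the second moment
    have hsq : Exp p μ (m + 1) t s (fun τ => Gest π μ r b (m + 1) t s τ ^ 2) =
        vf T p π r t s ^ 2 +
          ∑ a, μ t s a * ((π t s a / μ t s a) ^ 2 * uf T p π r b t s a) := by
      show (∑ a, μ t s a * ∑ s', p s a s' * Exp p μ m (t + 1) s'
          (fun τ => Gest π μ r b (m + 1) t s (a, s', τ) ^ 2)) = _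
      have inner : ∀ (a : A) (s' : S),
          Exp p μ m (t + 1) s' (fun τ => Gest π μ r b (m + 1) t s (a, s', τ) ^ 2) =
            (π t s a / μ t s a * (r s a - qf T p π r t s a) + vf T p π r t s) ^ 2 +
              (2 * (π t s a / μ t s a * (r s a - qf T p π r t s a) + vf T p π r t s) *
                (π t s a / μ t s a)) * vf T p π r (t + 1) s' +
              (π t s a / μ t s a) ^ 2 *
                (Var p μ m (t + 1) s' (Gest π μ r b m (t + 1) s') +
                  vf T p π r (t + 1) s' ^ 2) := by
        intro a s'
        have hGexp : ∀ τ : Traj S A m,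
            Gest π μ r b (m + 1) t s (a, s', τ) ^ 2 =
              ((π t s a / μ t s a * (r s a - qf T p π r t s a) + vf T p π r t s) ^ 2 +
                (2 * (π t s a / μ t s a * (r s a - qf T p π r t s a) + vf T p π r t s) *
                  (π t s a / μ t s a)) * Gest π μ r b m (t + 1) s' τ) +
              (π t s a / μ t s a) ^ 2 * (Gest π μ r b m (t + 1) s' τ) ^ 2 := by
          intro τ
          show (π t s a / μ t s a *
              (r s a + Gest π μ r b m (t + 1) s' τ - b t s a) + bbar π b t s) ^ 2 = _
          rw [hq a, bbar_bstar]
          ring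
        rw [Exp_congr p μ m (t + 1) s' _ _ hGexp, Exp_add, Exp_add,
          Exp_const p μ hp hμ1, Exp_smul, Exp_smul,
          Exp_Gest_bstar T p hp π r μ hμ1 m (t + 1) (by omega) s']
        have hv : Exp p μ m (t + 1) s' (fun τ => Gest π μ r b m (t + 1) s' τ ^ 2) =
            Var p μ m (t + 1) s' (Gest π μ r b m (t + 1) s') +
              vf T p π r (t + 1) s' ^ 2 := by
          rw [Var, Exp_Gest_bstar T p hp π r μ hμ1 m (t + 1) (by omega) s']
          ring
        rw [hv]
      have outer : ∀ a : A,
          (∑ s', p s a s' * Exp p μ m (t + 1) s'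
            (fun τ => Gest π μ r b (m + 1) t s (a, s', τ) ^ 2)) =
            vf T p π r t s ^ 2 + (π t s a / μ t s a) ^ 2 * uf T p π r b t s a := by
        intro a
        rw [Finset.sum_congr rfl fun s' _ => by rw [inner a s']]
        have hA : qf T p π r t s a = r s a + ∑ s', p s a s' * vf T p π r (t + 1) s' :=
          qf_succ T p π r t hT2 s a
        have hu : uf T p π r b t s a = nuf T p π r t s a +
            ∑ s', p s a s' * Var p μ m (t + 1) s' (Gest π μ r b m (t + 1) s') := by
          rw [uf_succ T p π r b t hT2 s a, hm, ← hq a]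
          have : b t s a - b t s a = 0 := sub_self _
          rw [hq a] at this ⊢
          rw [sub_self]
          ring
        have hnu : nuf T p π r t s a = (∑ s', p s a s' * vf T p π r (t + 1) s' ^ 2) -
            (∑ s', p s a s' * vf T p π r (t + 1) s') ^ 2 := by
          rw [nuf, if_pos hT2]
        -- expand the sum over s'
        have expand : ∀ s' : S,
            p s a s' * ((π t s a / μ t s a * (r s a - qf T p π r t s a) + vf T p π r t s) ^ 2 +
              (2 * (π t s a / μ t s a * (r s a - qf T p π r t s a) + vf T p π r t s) *
                (π t s a / μ t s a)) * vf T p π r (t + 1) s' +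
              (π t s a / μ t s a) ^ 2 *
                (Var p μ m (t + 1) s' (Gest π μ r b m (t + 1) s') +
                  vf T p π r (t + 1) s' ^ 2)) =
            (π t s a / μ t s a * (r s a - qf T p π r t s a) + vf T p π r t s) ^ 2 * p s a s' +
              (2 * (π t s a / μ t s a * (r s a - qf T p π r t s a) + vf T p π r t s) *
                (π t s a / μ t s a)) * (p s a s' * vf T p π r (t + 1) s') +
              ((π t s a / μ t s a) ^ 2 *
                  (p s a s' * Var p μ m (t + 1) s' (Gest π μ r b m (t + 1) s')) +
                (π t s a / μ t s a) ^ 2 * (p s a s' * vf T p π r (t + 1) s' ^ 2)) := by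
          intro s'; ring
        rw [Finset.sum_congr rfl fun s' _ => expand s']
        simp only [Finset.sum_add_distrib, ← Finset.sum_mul, ← Finset.mul_sum, (hp s a).2,
          one_mul, mul_one]
        rw [hu, hnu, hA]
        ring
      rw [Finset.sum_congr rfl fun a _ => by rw [outer a]]
      simp only [mul_add, Finset.sum_add_distrib, ← Finset.sum_mul, hμ1, one_mul]
    rw [Var, hsq, Exp_Gest_bstar T p hp π r μ hμ1 (m + 1) t hT s, add_sub_cancel_left]
    have hkey := key_sum (fun a => π t s a) (fun a => uf T p π r b t s a)
      (fun a => (hπ t s).1 a) (fun a => u_nonneg T p hp π hπ r b t (by omega) s a)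
    exact hkey

/-- Second moment of the on-policy PDIS estimator (one-step decomposition). -/
lemma Exp_sq_pdis (T : ℕ) (p : S → A → S → ℝ) (hp : IsKernel p)
    (π : ℕ → S → A → ℝ) (hπ : IsPolicy π) (r : S → A → ℝ)
    (m t : ℕ) (hT : t + (m + 1) + 1 = T) (s : S) :
    Exp p π (m + 1) t s (fun τ => Gest π π r zerob (m + 1) t s τ ^ 2) =
      ∑ a, π t s a * (qf T p π r t s a ^ 2 + nuf T p π r t s a +
        ∑ s', p s a s' * Var p π m (t + 1) s' (Gest π π r zerob m (t + 1) s')) := by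
  have hT2 : t + 2 ≤ T := by omega
  have hπ1 : ∀ t' s₁, ∑ a₁, π t' s₁ a₁ = 1 := fun t' s₁ => (hπ t' s₁).2
  have hbb : bbar π (zerob : ℕ → S → A → ℝ) t s = 0 := by simp [bbar, zerob]
  show (∑ a, π t s a * ∑ s', p s a s' * Exp p π m (t + 1) s'
      (fun τ => Gest π π r zerob (m + 1) t s (a, s', τ) ^ 2)) = _
  have inner : ∀ (a : A) (s' : S),
      Exp p π m (t + 1) s'
          (fun τ => Gest π π r zerob (m + 1) t s (a, s', τ) ^ 2) =
        (π t s a / π t s a) ^ 2 * r s a ^ 2 +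
          (2 * (π t s a / π t s a) ^ 2 * r s a) * vf T p π r (t + 1) s' +
          (π t s a / π t s a) ^ 2 *
            (Var p π m (t + 1) s' (Gest π π r zerob m (t + 1) s') +
              vf T p π r (t + 1) s' ^ 2) := by
    intro a s'
    have hGexp : ∀ τ : Traj S A m,
        Gest π π r zerob (m + 1) t s (a, s', τ) ^ 2 =
          ((π t s a / π t s a) ^ 2 * r s a ^ 2 +
            (2 * (π t s a / π t s a) ^ 2 * r s a) * Gest π π r zerob m (t + 1) s' τ) +
          (π t s a / π t s a) ^ 2 * (Gest π π r zerob m (t + 1) s' τ) ^ 2 := by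
      intro τ
      show (π t s a / π t s a *
          (r s a + Gest π π r zerob m (t + 1) s' τ - zerob t s a) + bbar π zerob t s) ^ 2 = _
      rw [hbb]
      show (π t s a / π t s a *
          (r s a + Gest π π r zerob m (t + 1) s' τ - 0) + 0) ^ 2 = _
      ring
    rw [Exp_congr p π m (t + 1) s' _ _ hGexp, Exp_add, Exp_add,
      Exp_const p π hp hπ1, Exp_smul, Exp_smul,
      Exp_Gest_pdis T p hp π hπ r m (t + 1) (by omega) s']
    have hv : Exp p π m (t + 1) s' (fun τ => Gest π π r zerob m (t + 1) s' τ ^ 2) =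
        Var p π m (t + 1) s' (Gest π π r zerob m (t + 1) s') +
          vf T p π r (t + 1) s' ^ 2 := by
      rw [Var, Exp_Gest_pdis T p hp π hπ r m (t + 1) (by omega) s']
      ring
    rw [hv]
  have outer : ∀ a : A,
      (∑ s', p s a s' * Exp p π m (t + 1) s'
        (fun τ => Gest π π r zerob (m + 1) t s (a, s', τ) ^ 2)) =
        (π t s a / π t s a) ^ 2 * (qf T p π r t s a ^ 2 + nuf T p π r t s a +
          ∑ s', p s a s' * Var p π m (t + 1) s' (Gest π π r zerob m (t + 1) s')) := by
    intro a
    rw [Finset.sum_congr rfl fun s' _ => by rw [inner a s']]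
    have hA : qf T p π r t s a = r s a + ∑ s', p s a s' * vf T p π r (t + 1) s' :=
      qf_succ T p π r t hT2 s a
    have hnu : nuf T p π r t s a = (∑ s', p s a s' * vf T p π r (t + 1) s' ^ 2) -
        (∑ s', p s a s' * vf T p π r (t + 1) s') ^ 2 := by
      rw [nuf, if_pos hT2]
    have expand : ∀ s' : S,
        p s a s' * ((π t s a / π t s a) ^ 2 * r s a ^ 2 +
            (2 * (π t s a / π t s a) ^ 2 * r s a) * vf T p π r (t + 1) s' +
            (π t s a / π t s a) ^ 2 *
              (Var p π m (t + 1) s' (Gest π π r zerob m (t + 1) s') +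
                vf T p π r (t + 1) s' ^ 2)) =
          (π t s a / π t s a) ^ 2 * r s a ^ 2 * p s a s' +
            (2 * (π t s a / π t s a) ^ 2 * r s a) * (p s a s' * vf T p π r (t + 1) s') +
            ((π t s a / π t s a) ^ 2 *
                (p s a s' * Var p π m (t + 1) s' (Gest π π r zerob m (t + 1) s')) +
              (π t s a / π t s a) ^ 2 * (p s a s' * vf T p π r (t + 1) s' ^ 2)) := by
      intro s'; ring
    rw [Finset.sum_congr rfl fun s' _ => expand s']
    simp only [Finset.sum_add_distrib, ← Finset.sum_mul, ← Finset.mul_sum, (hp s a).2,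
      one_mul, mul_one]
    rw [hnu, hA]
    ring
  rw [Finset.sum_congr rfl fun a _ => by rw [outer a]]
  refine Finset.sum_congr rfl fun a _ => ?_
  by_cases hπa : π t s a = 0
  · simp [hπa]
  · rw [div_self hπa, one_pow, one_mul]

lemma main_ind [Nonempty A] (T : ℕ) (p : S → A → S → ℝ) (hp : IsKernel p)
    (π : ℕ → S → A → ℝ) (hπ : IsPolicy π) (r : S → A → ℝ) :
    ∀ (n t : ℕ), t + n + 1 = T → ∀ s : S,
      (VarG T p π π r zerob t s -
          VarG T p π (mustar T p π r (bstar T p π r)) r (bstar T p π r) t s =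
        ((∑ a, π t s a * Real.sqrt (uf T p π r (bstar T p π r) t s a) ^ 2) -
            (∑ a, π t s a * Real.sqrt (uf T p π r (bstar T p π r) t s a)) ^ 2) +
          ((∑ a, π t s a * qf T p π r t s a ^ 2) - (∑ a, π t s a * qf T p π r t s a) ^ 2) +
          deltaON T p π r t s) ∧
      0 ≤ deltaON T p π r t s := by
  set b := bstar T p π r with hbdef
  set μ := mustar T p π r b with hμdef
  intro n
  induction n with
  | zero =>
    intro t hT s
    have ht1 : t + 1 = T := by omega
    have hδ0 : deltaON T p π r t s = 0 := by
      unfold deltaON; rw [if_neg (by omega)]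
    have hn0 : T - 1 - t = 0 := by omega
    have hu0 : ∀ a : A, uf T p π r b t s a = 0 := by
      intro a
      rw [uf_last T p π r b t ht1 s a]
      show (qf T p π r t s a - qf T p π r t s a) ^ 2 = 0
      rw [sub_self]; norm_num
    have hqr : ∀ a : A, qf T p π r t s a = r s a := fun a => qf_last T p π r t ht1 s a
    have hVstar0 : VarG T p π μ r b t s = 0 := by
      unfold VarG
      rw [hn0, Var_Gest_bstar T p hp π hπ r 0 t (by omega) s,
        Finset.sum_congr rfl fun a _ => by
          rw [hu0 a, Real.sqrt_zero, mul_zero]]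
      simp
    have hbb0 : bbar π (zerob : ℕ → S → A → ℝ) t s = 0 := by simp [bbar, zerob]
    have hVp0 : VarG T p π π r zerob t s =
        (∑ a, π t s a * r s a ^ 2) - (∑ a, π t s a * r s a) ^ 2 := by
      unfold VarG Var
      rw [hn0]
      have h1 : ∀ a : A, π t s a * Gest π π r zerob 0 t s a ^ 2 = π t s a * r s a ^ 2 := by
        intro a
        show π t s a *
          (π t s a / π t s a * (r s a - zerob t s a) + bbar π zerob t s) ^ 2 = _
        rw [hbb0]
        show π t s a * (π t s a / π t s a * (r s a - 0) + 0) ^ 2 = _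
        rw [sub_zero, add_zero]
        by_cases hπa : π t s a = 0
        · simp [hπa]
        · rw [div_self hπa, one_mul]
      have h2 : ∀ a : A, π t s a * Gest π π r zerob 0 t s a = π t s a * r s a := by
        intro a
        show π t s a *
          (π t s a / π t s a * (r s a - zerob t s a) + bbar π zerob t s) = _
        rw [hbb0]
        show π t s a * (π t s a / π t s a * (r s a - 0) + 0) = _
        rw [sub_zero, add_zero]
        by_cases hπa : π t s a = 0
        · simp [hπa]
        · rw [div_self hπa, one_mul]
      show (∑ a, π t s a * Gest π π r zerob 0 t s a ^ 2) -
          (∑ a, π t s a * Gest π π r zerob 0 t s a) ^ 2 = _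
      rw [Finset.sum_congr rfl fun a _ => h1 a, Finset.sum_congr rfl fun a _ => h2 a]
    refine ⟨?_, le_of_eq hδ0.symm⟩
    rw [hVp0, hVstar0, hδ0]
    have g1 : (∑ a, π t s a * Real.sqrt (uf T p π r b t s a) ^ 2) = 0 :=
      Finset.sum_eq_zero fun a _ => by rw [hu0 a, Real.sqrt_zero]; norm_num
    have g2 : (∑ a, π t s a * Real.sqrt (uf T p π r b t s a)) = 0 :=
      Finset.sum_eq_zero fun a _ => by rw [hu0 a, Real.sqrt_zero, mul_zero]
    have g3 : (∑ a, π t s a * qf T p π r t s a ^ 2) = ∑ a, π t s a * r s a ^ 2 :=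
      Finset.sum_congr rfl fun a _ => by rw [hqr a]
    have g4 : (∑ a, π t s a * qf T p π r t s a) = ∑ a, π t s a * r s a :=
      Finset.sum_congr rfl fun a _ => by rw [hqr a]
    rw [g1, g2, g3, g4]
    ring
  | succ m ih =>
    intro t hT s
    have hT2 : t + 2 ≤ T := by omega
    have hm1 : T - 1 - t = m + 1 := by omega
    have hm2 : T - 1 - (t + 1) = m := by omega
    have hmm : T - 2 - t = m := by omega
    -- abbreviations for the future variances
    have hδ : deltaON T p π r t s =
        ∑ a, π t s a * ∑ s', p s a s' *
          (Var p π m (t + 1) s' (Gest π π r zerob m (t + 1) s') -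
            Var p μ m (t + 1) s' (Gest π μ r b m (t + 1) s')) := by
      unfold deltaON
      rw [if_pos hT2]
      unfold VarG
      rw [hm2]
    -- δ ≥ 0 from the induction hypothesis
    have hdiff : ∀ s' : S,
        0 ≤ Var p π m (t + 1) s' (Gest π π r zerob m (t + 1) s') -
          Var p μ m (t + 1) s' (Gest π μ r b m (t + 1) s') := by
      intro s'
      obtain ⟨heq, hδ'⟩ := ih (t + 1) (by omega) s'
      have hv1 : 0 ≤ (∑ a, π (t + 1) s' a * Real.sqrt (uf T p π r b (t + 1) s' a) ^ 2) -
          (∑ a, π (t + 1) s' a * Real.sqrt (uf T p π r b (t + 1) s' a)) ^ 2 := by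
        have := sq_sum_le_sum_sq (fun a => π (t + 1) s' a)
          (fun a => Real.sqrt (uf T p π r b (t + 1) s' a))
          (fun a => (hπ (t + 1) s').1 a) (hπ (t + 1) s').2
        linarith
      have hv2 : 0 ≤ (∑ a, π (t + 1) s' a * qf T p π r (t + 1) s' a ^ 2) -
          (∑ a, π (t + 1) s' a * qf T p π r (t + 1) s' a) ^ 2 := by
        have := sq_sum_le_sum_sq (fun a => π (t + 1) s' a)
          (fun a => qf T p π r (t + 1) s' a)
          (fun a => (hπ (t + 1) s').1 a) (hπ (t + 1) s').2
        linarith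
      have hunf : VarG T p π π r zerob (t + 1) s' -
          VarG T p π μ r b (t + 1) s' =
          Var p π m (t + 1) s' (Gest π π r zerob m (t + 1) s') -
            Var p μ m (t + 1) s' (Gest π μ r b m (t + 1) s') := by
        unfold VarG; rw [hm2]
      rw [← hunf, heq]
      linarith
    have hδnn : 0 ≤ deltaON T p π r t s := by
      rw [hδ]
      refine Finset.sum_nonneg fun a _ => mul_nonneg ((hπ t s).1 a) ?_
      exact Finset.sum_nonneg fun s' _ => mul_nonneg ((hp s a).1 s') (hdiff s')
    refine ⟨?_, hδnn⟩
    -- the equality at time t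
    have hμ1 : ∀ t' s₁, ∑ a₁, μ t' s₁ a₁ = 1 := fun t' s₁ => mustar_sum_one T p π r b t' s₁
    have hVpdis : VarG T p π π r zerob t s =
        (∑ a, π t s a * (qf T p π r t s a ^ 2 + nuf T p π r t s a +
          ∑ s', p s a s' * Var p π m (t + 1) s' (Gest π π r zerob m (t + 1) s'))) -
          vf T p π r t s ^ 2 := by
      unfold VarG
      rw [hm1]
      show Exp p π (m + 1) t s (fun τ => Gest π π r zerob (m + 1) t s τ ^ 2) -
          Exp p π (m + 1) t s (Gest π π r zerob (m + 1) t s) ^ 2 = _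
      rw [Exp_sq_pdis T p hp π hπ r m t (by omega) s,
        Exp_Gest_pdis T p hp π hπ r (m + 1) t (by omega) s]
    have hVstar : VarG T p π μ r b t s =
        (∑ a, π t s a * Real.sqrt (uf T p π r b t s a)) ^ 2 := by
      unfold VarG
      rw [hm1]
      exact Var_Gest_bstar T p hp π hπ r (m + 1) t (by omega) s
    have hu : ∀ a : A, uf T p π r b t s a = nuf T p π r t s a +
        ∑ s', p s a s' * Var p μ m (t + 1) s' (Gest π μ r b m (t + 1) s') := by
      intro a
      rw [uf_succ T p π r b t hT2 s a, hmm]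
      show (qf T p π r t s a - qf T p π r t s a) ^ 2 + _ + _ = _
      rw [sub_self]
      ring
    have hsqrt : ∀ a : A, Real.sqrt (uf T p π r b t s a) ^ 2 = uf T p π r b t s a :=
      fun a => Real.sq_sqrt (u_nonneg T p hp π hπ r b t (by omega) s a)
    rw [hVpdis, hVstar, hδ]
    have hvf : vf T p π r t s = ∑ a, π t s a * qf T p π r t s a := rfl
    -- expand all the sums
    have e1 : (∑ a, π t s a * (qf T p π r t s a ^ 2 + nuf T p π r t s a +
          ∑ s', p s a s' * Var p π m (t + 1) s' (Gest π π r zerob m (t + 1) s'))) =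
        (∑ a, π t s a * qf T p π r t s a ^ 2) + (∑ a, π t s a * nuf T p π r t s a) +
          ∑ a, π t s a * ∑ s', p s a s' *
            Var p π m (t + 1) s' (Gest π π r zerob m (t + 1) s') := by
      simp only [mul_add, Finset.sum_add_distrib]
    have e2 : (∑ a, π t s a * ∑ s', p s a s' *
          (Var p π m (t + 1) s' (Gest π π r zerob m (t + 1) s') -
            Var p μ m (t + 1) s' (Gest π μ r b m (t + 1) s'))) =
        (∑ a, π t s a * ∑ s', p s a s' *
            Var p π m (t + 1) s' (Gest π π r zerob m (t + 1) s')) -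
          ∑ a, π t s a * ∑ s', p s a s' *
            Var p μ m (t + 1) s' (Gest π μ r b m (t + 1) s') := by
      simp only [mul_sub, Finset.sum_sub_distrib]
    have e3 : (∑ a, π t s a * Real.sqrt (uf T p π r b t s a) ^ 2) =
        (∑ a, π t s a * nuf T p π r t s a) +
          ∑ a, π t s a * ∑ s', p s a s' *
            Var p μ m (t + 1) s' (Gest π μ r b m (t + 1) s') := by
      rw [Finset.sum_congr rfl fun a _ => by rw [hsqrt a, hu a],
        ← Finset.sum_add_distrib]
      exact Finset.sum_congr rfl fun a _ => by rw [mul_add]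
    rw [e1, e2, e3, hvf]
    ring

end Aux

/-- Comparison with on-policy Monte Carlo: with `b*_t(s,a) = q_{π,t}(s,a)`,
`μ* = μ^{*,b*}` and `u^{b*}` the function `u` for the baseline `b*`, for every `t` and `s`,
`Var(G^{PDIS}(τ^π_{t:T−1})|S_t=s) − Var(G^{b*}(τ^{μ*}_{t:T−1})|S_t=s)
  = Var_{a∼π_t(·|s)}(√(u^{b*}_t(s,a))) + Var_{a∼π_t(·|s)}(q_{π,t}(s,a)) + δ^{ON}_t(s)`,
and moreover `δ^{ON}_t(s) ≥ 0`. -/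
theorem comparison_with_onpolicy {S A : Type} [Fintype S] [Fintype A] [Nonempty A]
    (T : ℕ) (hT : 1 ≤ T)
    (p : S → A → S → ℝ) (hp : IsKernel p)
    (r : S → A → ℝ)
    (π : ℕ → S → A → ℝ) (hπ : IsPolicy π)
    (t : ℕ) (ht : t < T) (s : S) :
    (VarG T p π π r zerob t s -
        VarG T p π (mustar T p π r (bstar T p π r)) r (bstar T p π r) t s =
      ((∑ a, π t s a * Real.sqrt (uf T p π r (bstar T p π r) t s a) ^ 2) -
          (∑ a, π t s a * Real.sqrt (uf T p π r (bstar T p π r) t s a)) ^ 2) +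
        ((∑ a, π t s a * qf T p π r t s a ^ 2) - (∑ a, π t s a * qf T p π r t s a) ^ 2) +
        deltaON T p π r t s) ∧
    0 ≤ deltaON T p π r t s :=
  main_ind T p hp π hπ r (T - 1 - t) t (by omega) s

end DOpt
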